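/- arXiv:2601.20927 — 3 statements merged into one kernel-verified Lean document; each statement's English description precedes it below -/
import Mathlib

section
/- Let k ≥ 3 and let A, B be k × k matrices over 𝔽₂ such that (1) the k × 2k augmented matrix [A | B] has rank k, and (2) for every invertible k × k matrix E over 𝔽₂, A·E·Bᵀ + B·(E⁻¹)ᵀ·Aᵀ = 0. Then A = 0 or B = 0. -/
/-!
Over any commutative ring the hypothesis, applied to `E = 1` and to the transvections
`1 + e_ij` (inverse `1 - e_ij`), gives `A e_ij Bᵀ = B e_ji Aᵀ` for `i ≠ j`. For three distinct
indices put `N = e_ij + e_jl`; then `N² = e_il` and `N³ = 0`, so `(1 + N)⁻¹ = 1 - N + e_il`,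
and the hypothesis for `E = 1 + N` leaves `B e_li Aᵀ = 0`. This matrix is the outer product of
column `l` of `B` and column `i` of `A`, so over a domain column `i` of `A` or column `l` of `B`
vanishes. As `k ≥ 3` there is always a third index, so if `A` and `B` are both nonzero they are
supported on one common column and `[A | B]` has rank at most `2 < k`.
-/

namespace Matrix

section CommRing

variable {R : Type*} [CommRing R] {m n : Type*} [Fintype n] [DecidableEq n]

theorem mul_single_one_mul_transpose (M N : Matrix m n R) (i j : n) :
    M * single i j (1 : R) * Nᵀ = vecMulVec (M.col i) (N.col j) := by
  rw [single_eq_single_vecMulVec_single, mul_vecMulVec, vecMulVec_mul, mulVec_single_one,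
    vecMul_transpose, mulVec_single_one]

variable {A B : Matrix n n R}

theorem mul_mul_transpose_add_eq_zero_of_mul_eq_one
    (hAB : ∀ E : Matrix n n R, IsUnit E → A * E * Bᵀ + B * E⁻¹ᵀ * Aᵀ = 0)
    {E F : Matrix n n R} (hEF : E * F = 1) : A * E * Bᵀ + B * Fᵀ * Aᵀ = 0 := by
  have h := hAB E (IsUnit.of_mul_eq_one F hEF)
  rwa [inv_eq_right_inv hEF] at h

theorem mul_single_mul_transpose_eq
    (hAB : ∀ E : Matrix n n R, IsUnit E → A * E * Bᵀ + B * E⁻¹ᵀ * Aᵀ = 0)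
    {i j : n} (hij : i ≠ j) :
    A * single i j 1 * Bᵀ = B * single j i 1 * Aᵀ := by
  have h₁ := mul_mul_transpose_add_eq_zero_of_mul_eq_one hAB (mul_one (1 : Matrix n n R))
  have h₂ := mul_mul_transpose_add_eq_zero_of_mul_eq_one hAB
    (E := 1 + single i j 1) (F := 1 - single i j 1) (by simp [mul_sub, add_mul, hij.symm])
  simp only [transpose_one, mul_one, transpose_sub, transpose_single] at h₁ h₂
  linear_combination (norm := skip) h₂ - h₁
  simp only [mul_add, add_mul, mul_sub, sub_mul, mul_one]
  abel

theorem mul_single_mul_transpose_eq_zero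
    (hAB : ∀ E : Matrix n n R, IsUnit E → A * E * Bᵀ + B * E⁻¹ᵀ * Aᵀ = 0)
    {i j l : n} (hij : i ≠ j) (hjl : j ≠ l) (hil : i ≠ l) :
    B * single l i 1 * Aᵀ = 0 := by
  set N : Matrix n n R := single i j 1 + single j l 1
  have hNN : N * N = single i l 1 := by
    simp [N, mul_add, add_mul, hij.symm, hil.symm, hjl.symm]
  have hN : N * single i l 1 = 0 := by
    simp [N, add_mul, hij.symm, hil.symm]
  have h₁ := mul_mul_transpose_add_eq_zero_of_mul_eq_one hAB (mul_one (1 : Matrix n n R))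
  have h₂ := mul_mul_transpose_add_eq_zero_of_mul_eq_one hAB
    (E := 1 + N) (F := 1 - N + single i l 1) (by
      simp only [add_mul, mul_add, mul_sub, one_mul, mul_one, hNN, hN]
      abel)
  have hNt : A * N * Bᵀ = B * Nᵀ * Aᵀ := by
    simp only [N, transpose_add, transpose_single, mul_add, add_mul,
      mul_single_mul_transpose_eq hAB hij, mul_single_mul_transpose_eq hAB hjl]
  simp only [transpose_one, mul_one, transpose_add, transpose_sub, transpose_single] at h₁ h₂
  linear_combination (norm := skip) h₂ - h₁ - hNt
  simp only [mul_add, add_mul, mul_sub, sub_mul, mul_one]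
  abel

theorem col_eq_zero_or_col_eq_zero [NoZeroDivisors R]
    (hAB : ∀ E : Matrix n n R, IsUnit E → A * E * Bᵀ + B * E⁻¹ᵀ * Aᵀ = 0)
    (hn : 3 ≤ Fintype.card n) {i l : n} (hil : i ≠ l) : A.col i = 0 ∨ B.col l = 0 := by
  obtain ⟨j, -, hj⟩ := Finset.exists_mem_notMem_of_card_lt_card (s := {i, l}) (t := .univ)
    (Finset.card_le_two.trans_lt (by rw [Finset.card_univ]; omega))
  rw [Finset.mem_insert, Finset.mem_singleton, not_or] at hj
  have h := mul_single_mul_transpose_eq_zero hAB (Ne.symm hj.1) hj.2 hil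
  rwa [mul_single_one_mul_transpose, vecMulVec_eq_zero, or_comm] at h

end CommRing

theorem exists_forall_ne_col_eq_zero {α m n : Type*} [Zero α] {A B : Matrix m n α}
    (hAB : ∀ i l, i ≠ l → A.col i = 0 ∨ B.col l = 0) (hA : A ≠ 0) (hB : B ≠ 0) :
    ∃ i, ∀ j ≠ i, A.col j = 0 ∧ B.col j = 0 := by
  obtain ⟨i, hi⟩ : ∃ i, A.col i ≠ 0 := not_forall.mp fun h => hA (ext_col h)
  obtain ⟨l, hl⟩ : ∃ l, B.col l ≠ 0 := not_forall.mp fun h => hB (ext_col h)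
  obtain rfl : i = l := by
    by_contra hil
    exact (hAB i l hil).elim hi hl
  exact ⟨i, fun j hj =>
    ⟨(hAB j i hj).resolve_right hl, (hAB i j (Ne.symm hj)).resolve_left hi⟩⟩

theorem rank_fromCols_le_two {K m n : Type*} [Field K] [Fintype m] [Fintype n] [DecidableEq n]
    (A B : Matrix m n K) (i : n)
    (h : ∀ j ≠ i, A.col j = 0 ∧ B.col j = 0) : (fromCols A B).rank ≤ 2 := by
  rw [← rank_transpose]
  refine (rank_le_card_of_support_subset _ {Sum.inl i, Sum.inr i} ?_).trans Finset.card_le_two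
  rintro (j | j) hj <;> by_contra hji <;> refine hj (funext fun x => ?_)
  · simpa using congrFun (h j (by simpa using hji)).1 x
  · simpa using congrFun (h j (by simpa using hji)).2 x

end Matrix

open Matrix

theorem stmt_0 (k : ℕ) (hk : 3 ≤ k)
    (A B : Matrix (Fin k) (Fin k) (ZMod 2))
    (hrank : (Matrix.fromCols A B).rank = k)
    (hcomm : ∀ E : Matrix (Fin k) (Fin k) (ZMod 2), IsUnit E →
      A * E * B.transpose + B * E⁻¹.transpose * A.transpose = 0) :
    A = 0 ∨ B = 0 := by
  by_contra! hAB
  obtain ⟨i, hi⟩ := exists_forall_ne_col_eq_zero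
    (fun _ _ => col_eq_zero_or_col_eq_zero hcomm (by simpa using hk)) hAB.1 hAB.2
  have := rank_fromCols_le_two A B i hi
  omega
end

section
/- Every k × k matrix U over 𝔽₂ (k ≥ 2) can be written as a sum U = U₁ + U₂ of two invertible matrices U₁, U₂ ∈ GL(k, 𝔽₂). -/
open Matrix

private theorem diag_sum_units (m : ℕ) (d : Fin (m+2) → ZMod 2) :
    ∃ A B : Matrix (Fin (m+2)) (Fin (m+2)) (ZMod 2),
      IsUnit A ∧ IsUnit B ∧ diagonal d = A + B := by
  set σ := finRotate (m+2) with hσ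
  have hσapp : ∀ i : Fin (m+2), σ i = i + 1 := fun i => finRotate_succ_apply i
  have hσne : ∀ i : Fin (m+2), σ i ≠ i := by
    intro i h
    rw [hσapp] at h
    exact one_ne_zero (add_eq_left.mp h)
  have hlow : ∀ i j : Fin (m+2), i < j → ¬(σ j = i ∧ i ≠ 0) := by
    rintro i j hij ⟨h1, h2⟩
    rw [hσapp] at h1
    rcases eq_or_ne j (Fin.last (m+1)) with hl | hl
    · subst hl; rw [Fin.last_add_one] at h1; exact h2 h1.symm
    · have hv : ((j:ℕ)+1) = (i:ℕ) := by
        rw [← h1, Fin.val_add_one_of_lt (Fin.lt_last_iff_ne_last.mpr hl)]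
      have : (i:ℕ) < (j:ℕ) := hij
      omega
  set P : Matrix (Fin (m+2)) (Fin (m+2)) (ZMod 2) := σ.toPEquiv.toMatrix with hP
  set NA : Matrix (Fin (m+2)) (Fin (m+2)) (ZMod 2) :=
    Matrix.of (fun i j => if σ j = i ∧ i ≠ 0 then d i else 0) with hNA
  set NB : Matrix (Fin (m+2)) (Fin (m+2)) (ZMod 2) :=
    Matrix.of (fun i j => if σ j = i ∧ i = 0 then d i else 0) with hNB
  have hPunit : IsUnit P := by
    rw [Matrix.isUnit_iff_isUnit_det, hP,
      show (σ.toPEquiv.toMatrix : Matrix _ _ (ZMod 2)) = σ.permMatrix (ZMod 2) from rfl,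
      Matrix.det_permutation σ]
    exact (Equiv.Perm.sign σ).isUnit.map (Int.castRingHom (ZMod 2))
  have hAunit : IsUnit (1 + NA) := by
    rw [Matrix.isUnit_iff_isUnit_det, Matrix.det_of_lowerTriangular]
    · apply IsUnit.of_mul_eq_one 1
      rw [mul_one]
      apply Finset.prod_eq_one
      intro i _
      simp [hNA, Matrix.one_apply, hσne i]
    · intro i j hij
      have hij' : i < j := hij
      simp only [Matrix.add_apply, Matrix.one_apply, hNA, Matrix.of_apply]
      rw [if_neg (Fin.ne_of_lt hij'), if_neg (hlow i j hij'), add_zero]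
  have hBunit : IsUnit (1 + NB) := by
    rw [Matrix.isUnit_iff_isUnit_det, Matrix.det_of_upperTriangular]
    · apply IsUnit.of_mul_eq_one 1
      rw [mul_one]
      apply Finset.prod_eq_one
      intro i _
      simp [hNB, Matrix.one_apply, hσne i]
    · intro i j hij
      have hij' : j < i := hij
      simp only [Matrix.add_apply, Matrix.one_apply, hNB, Matrix.of_apply]
      rw [if_neg (Ne.symm (Fin.ne_of_lt hij')), if_neg, add_zero]
      rintro ⟨h1, h2⟩
      subst h2
      exact (Fin.not_lt_zero j) hij'
  refine ⟨(1 + NA) * P, (1 + NB) * P, hAunit.mul hPunit, hBunit.mul hPunit, ?_⟩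
  rw [← add_mul]
  have hsum : (1 + NA) + (1 + NB) = NA + NB := by
    ext i j
    simp only [Matrix.add_apply, Matrix.one_apply]
    have h2 : ∀ x : ZMod 2, x + x = 0 := by decide
    split_ifs <;> simp_all
  rw [hsum, hP, PEquiv.mul_toMatrix_toPEquiv]
  ext i j
  simp only [Matrix.submatrix_apply, Matrix.add_apply, hNA, hNB, Matrix.of_apply, id,
    Matrix.diagonal_apply, Equiv.apply_symm_apply]
  rcases eq_or_ne i j with rfl | hij
  · rcases eq_or_ne i 0 with rfl | h0 <;> simp [*]
  · rw [if_neg hij, if_neg (fun h => hij h.1.symm), if_neg (fun h => hij h.1.symm), add_zero]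

theorem stmt_3 (k : ℕ) (hk : 2 ≤ k) (U : Matrix (Fin k) (Fin k) (ZMod 2)) :
    ∃ U₁ U₂ : Matrix (Fin k) (Fin k) (ZMod 2),
      IsUnit U₁ ∧ IsUnit U₂ ∧ U = U₁ + U₂ := by
  obtain ⟨m, rfl⟩ : ∃ m, k = m + 2 := ⟨k - 2, by omega⟩
  obtain ⟨L, L', d, hU⟩ := Matrix.Pivot.exists_list_transvec_mul_diagonal_mul_list_transvec U
  obtain ⟨A, B, hA, hB, hD⟩ := diag_sum_units m d
  have hL : IsUnit (L.map Matrix.TransvectionStruct.toMatrix).prod := by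
    rw [Matrix.isUnit_iff_isUnit_det, Matrix.TransvectionStruct.det_toMatrix_prod]
    exact isUnit_one
  have hL' : IsUnit (L'.map Matrix.TransvectionStruct.toMatrix).prod := by
    rw [Matrix.isUnit_iff_isUnit_det, Matrix.TransvectionStruct.det_toMatrix_prod]
    exact isUnit_one
  refine ⟨(L.map Matrix.TransvectionStruct.toMatrix).prod * A *
      (L'.map Matrix.TransvectionStruct.toMatrix).prod,
    (L.map Matrix.TransvectionStruct.toMatrix).prod * B *
      (L'.map Matrix.TransvectionStruct.toMatrix).prod,
    (hL.mul hA).mul hL', (hL.mul hB).mul hL', ?_⟩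
  rw [hU, hD, mul_add, add_mul]
end

section
/- Let B(n, d) be the maximum size of a family of binary strings of length n, each of Hamming weight exactly d, such that the mod-2 sum of any two distinct strings in the family has Hamming weight at least d. Then B(n, d) ≤ ⌊ C(n, t) / C(d, t) ⌋ where t = ⌊d/2⌋ + 1. -/
open Finset

theorem stmt_7 (n d : ℕ) (hd : 1 ≤ d)
    (F : Finset (Fin n → ZMod 2))
    (hw : ∀ x ∈ F, hammingNorm x = d)
    (hsum : ∀ x ∈ F, ∀ y ∈ F, x ≠ y → d ≤ hammingNorm (x + y)) :
    F.card ≤ Nat.choose n (d / 2 + 1) / Nat.choose d (d / 2 + 1) := by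
  classical
  set t := d / 2 + 1 with ht
  have htd : t ≤ d := by omega
  -- support map
  set supp : (Fin n → ZMod 2) → Finset (Fin n) :=
    fun x => univ.filter (fun i => x i ≠ 0) with hsupp
  have hnorm : ∀ x, hammingNorm x = (supp x).card := fun x => rfl
  have hsupp_add : ∀ x y : Fin n → ZMod 2, supp (x + y) = symmDiff (supp x) (supp y) := by
    intro x y
    ext i
    simp only [hsupp, mem_filter, mem_univ, true_and, Finset.mem_symmDiff, Pi.add_apply]
    have : ∀ a b : ZMod 2, (a + b ≠ 0 ↔ (a ≠ 0 ∧ ¬b ≠ 0) ∨ (b ≠ 0 ∧ ¬a ≠ 0)) := by decide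
    exact this (x i) (y i)
  -- intersection bound
  have hinter : ∀ x ∈ F, ∀ y ∈ F, x ≠ y → (supp x ∩ supp y).card < t := by
    intro x hx y hy hxy
    have h1 : d ≤ (symmDiff (supp x) (supp y)).card := by
      rw [← hsupp_add, ← hnorm]; exact hsum x hx y hy hxy
    have h2 : (symmDiff (supp x) (supp y)).card + 2 * (supp x ∩ supp y).card
        = (supp x).card + (supp y).card := by
      rw [symmDiff_def, Finset.sup_eq_union]
      rw [Finset.card_union_of_disjoint (disjoint_sdiff_sdiff)]
      have h3 := Finset.card_sdiff_add_card_inter (supp x) (supp y)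
      have h4 := Finset.card_sdiff_add_card_inter (supp y) (supp x)
      rw [Finset.inter_comm] at h4
      omega
    have hxd : (supp x).card = d := by rw [← hnorm]; exact hw x hx
    have hyd : (supp y).card = d := by rw [← hnorm]; exact hw y hy
    omega
  -- injectivity of supp on F
  have hinj : Set.InjOn supp F := by
    intro x hx y hy hxy
    by_contra hne
    have := hinter x hx y hy hne
    rw [hxy, Finset.inter_self] at this
    have : (supp y).card = d := by rw [← hnorm]; exact hw y hy
    omega
  set S := F.image supp with hS
  have hScard : S.card = F.card := Finset.card_image_of_injOn hinj
  -- pairwise disjoint t-subsets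
  have hdisj : (S : Set (Finset (Fin n))).PairwiseDisjoint
      (fun A => Finset.powersetCard t A) := by
    intro A hA B hB hAB
    simp only [hS, Finset.coe_image, Set.mem_image] at hA hB
    obtain ⟨x, hx, rfl⟩ := hA
    obtain ⟨y, hy, rfl⟩ := hB
    have hxy : x ≠ y := fun h => hAB (by rw [h])
    rw [Function.onFun, Finset.disjoint_left]
    intro s hs hs'
    rw [Finset.mem_powersetCard] at hs hs'
    have : s ⊆ supp x ∩ supp y := Finset.subset_inter hs.1 hs'.1
    have := Finset.card_le_card this
    have := hinter x (by simpa using hx) y (by simpa using hy) hxy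
    omega
  have hcount : S.card * Nat.choose d t ≤ Nat.choose n t := by
    have hbu : (S.biUnion fun A => Finset.powersetCard t A).card
        = ∑ A ∈ S, (Finset.powersetCard t A).card :=
      Finset.card_biUnion hdisj
    have hsum' : ∑ A ∈ S, (Finset.powersetCard t A).card = S.card * Nat.choose d t := by
      rw [Finset.sum_congr rfl fun A hA => ?_, Finset.sum_const, smul_eq_mul]
      rw [Finset.card_powersetCard]
      simp only [hS, Finset.mem_image] at hA
      obtain ⟨x, hx, rfl⟩ := hA
      rw [← hnorm, hw x hx]
    have hsub : (S.biUnion fun A => Finset.powersetCard t A)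
        ⊆ Finset.powersetCard t (univ : Finset (Fin n)) := by
      intro s hs
      rw [Finset.mem_biUnion] at hs
      obtain ⟨A, _, hA⟩ := hs
      rw [Finset.mem_powersetCard] at hA ⊢
      exact ⟨Finset.subset_univ _, hA.2⟩
    have := Finset.card_le_card hsub
    rw [hbu, hsum'] at this
    rwa [Finset.card_powersetCard, Finset.card_univ, Fintype.card_fin] at this
  have hpos : 0 < Nat.choose d t := Nat.choose_pos htd
  rw [Nat.le_div_iff_mul_le hpos]
  rw [← hScard]
  exact hcount
end
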